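/- If an element g of G_A can be represented by a word over {a, a⁻¹, b, b⁻¹, c, c⁻¹} whose exponent sum ord(w) equals 0, then g ∈ W. In particular g³ = 1, and any two elements of G_A representable by words of exponent sum 0 commute with each other. -/

import Mathlib

/-!
We formalize the automaton `A` of the paper: alphabet `X = {1,2,3}` is encoded as
`Fin 3` (letter `i+1` ↦ `i`), states `a, b, c` are encoded as `0, 1, 2 : Fin 3`.
Each state induces a permutation of the space `ℕ → Fin 3` of infinite sequences.

Note on conventions: in the paper, products of tree automorphisms compose
left-to-right (in a word `s₁s₂⋯sₙ`, the letter `s₁` acts first); in Mathlib,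
`(f * g) w = f (g w)`, i.e. the right factor acts first.  Hence a paper word
`uv` is rendered as the Lean product `v * u`; e.g. the paper's `α = ab⁻¹`
(apply `a`, then `b⁻¹`) is `b⁻¹ * a` below.
-/

namespace Lamplighter

section Generic

variable {S X : Type*}

/-- The state of the automaton after reading the first `n` letters of `w`, starting at `s`. -/
def run (nxt : S → X → S) (s : S) (w : ℕ → X) : ℕ → S
  | 0 => s
  | n + 1 => nxt (run nxt s w n) (w n)

/-- The output sequence of the automaton started in state `s` reading `w`. -/
def fwd (nxt : S → X → S) (out : S → Equiv.Perm X) (s : S) (w : ℕ → X) : ℕ → X :=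
  fun n => out (run nxt s w n) (w n)

/-- Transition function of the inverse automaton. -/
def invNxt (nxt : S → X → S) (out : S → Equiv.Perm X) (s : S) (y : X) : S :=
  nxt s ((out s).symm y)

/-- The action of the inverse automaton, started at state `s`. -/
def bwd (nxt : S → X → S) (out : S → Equiv.Perm X) (s : S) (y : ℕ → X) : ℕ → X :=
  fun n => (out (run (invNxt nxt out) s y n)).symm (y n)

theorem run_inv_fwd (nxt : S → X → S) (out : S → Equiv.Perm X) (s : S) (w : ℕ → X) :
    ∀ n, run (invNxt nxt out) s (fwd nxt out s w) n = run nxt s w n := by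
  intro n
  induction n with
  | zero => rfl
  | succ n ih => simp [run, ih, invNxt, fwd]

theorem run_bwd (nxt : S → X → S) (out : S → Equiv.Perm X) (s : S) (y : ℕ → X) :
    ∀ n, run nxt s (bwd nxt out s y) n = run (invNxt nxt out) s y n := by
  intro n
  induction n with
  | zero => rfl
  | succ n ih => simp [run, ih, bwd, invNxt]

/-- The permutation of the space of infinite sequences induced by state `s`
of an invertible automaton. -/
def statePerm (nxt : S → X → S) (out : S → Equiv.Perm X) (s : S) : Equiv.Perm (ℕ → X) where
  toFun := fwd nxt out s
  invFun := bwd nxt out s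
  left_inv := fun w => funext fun n => by simp [bwd, run_inv_fwd, fwd]
  right_inv := fun y => funext fun n => by simp [fwd, run_bwd, bwd]

end Generic

/-- The alphabet `X = {1,2,3}`, encoded as `Fin 3`. -/
abbrev X3 := Fin 3

/-- Transition function of the automaton `A` (states `a = 0`, `b = 1`, `c = 2`):
from `a`: `1 ↦ a, 2 ↦ b, 3 ↦ c`; from `b`: `1 ↦ c, 2 ↦ a, 3 ↦ b`;
from `c`: `1 ↦ b, 2 ↦ c, 3 ↦ a`. -/
def nxtA : Fin 3 → X3 → Fin 3 := ![![0, 1, 2], ![2, 0, 1], ![1, 2, 0]]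

/-- Output permutations of the automaton `A`: state `a` acts on letters as the
transposition `(2 3)`, state `b` as `(1 3)`, state `c` as `(1 2)`. -/
def outA : Fin 3 → Equiv.Perm X3 := ![Equiv.swap 1 2, Equiv.swap 0 2, Equiv.swap 0 1]

/-- The permutation of `X^ℕ` given by state `a`. -/
def a : Equiv.Perm (ℕ → X3) := statePerm nxtA outA 0

/-- The permutation of `X^ℕ` given by state `b`. -/
def b : Equiv.Perm (ℕ → X3) := statePerm nxtA outA 1

/-- The permutation of `X^ℕ` given by state `c`. -/
def c : Equiv.Perm (ℕ → X3) := statePerm nxtA outA 2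

/-- The group `G_A` generated by the automaton `A`. -/
def GA : Subgroup (Equiv.Perm (ℕ → X3)) := Subgroup.closure {a, b, c}

/-- The element `α = ab⁻¹` of the paper (first apply `a`, then `b⁻¹`). -/
def α : Equiv.Perm (ℕ → X3) := b⁻¹ * a

/-- The set `W` of permutations acting coordinatewise by a sequence of even
permutations of the alphabet. -/
def W : Set (Equiv.Perm (ℕ → X3)) :=
  {g | ∃ π : ℕ → Equiv.Perm X3, (∀ n, Equiv.Perm.sign (π n) = 1) ∧
    ∀ (w : ℕ → X3) (n : ℕ), g w n = π n (w n)}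

/-- The subgroup `N` generated by the conjugates `a⁻ⁿ α aⁿ`, `n ∈ ℤ`
(in Lean's composition order: `aⁿ * α * a⁻ⁿ`). -/
def N : Subgroup (Equiv.Perm (ℕ → X3)) :=
  Subgroup.closure {g | ∃ n : ℤ, g = a ^ n * α * a ^ (-n)}

/-- The generators `a, b, c` indexed by `Fin 3`. -/
def gens : Fin 3 → Equiv.Perm (ℕ → X3) := ![a, b, c]

/-- A word over `{a, a⁻¹, b, b⁻¹, c, c⁻¹}` is a list of pairs `(i, e)` where `i`
names the generator and `e = true` means exponent `+1`, `e = false` exponent `-1`. -/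
def letterOf (p : Fin 3 × Bool) : Equiv.Perm (ℕ → X3) :=
  if p.2 then gens p.1 else (gens p.1)⁻¹

/-- Evaluation of a word, letters acting left-to-right as in the paper
(so the Lean product is taken over the reversed list). -/
def evalWord (l : List (Fin 3 × Bool)) : Equiv.Perm (ℕ → X3) :=
  ((l.map letterOf).reverse).prod

/-- `ord w`: the sum of the exponents of the letters of the word `w`. -/
def ordWord (l : List (Fin 3 × Bool)) : ℤ :=
  (l.map fun p => if p.2 then (1 : ℤ) else -1).sum

/-!
Identify the alphabet with `ℤ/3`. Then `nxtA s x = x - s` and `outA s x = -x - s`, so the state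
sequence of a run depends additively on the pair (initial state, input), and state `s` acts by
`w ↦ a w + s 0`, with `a` an additive automorphism of `(ℤ/3)^ℕ`. Hence `a` normalizes the group `T`
of translations of `(ℤ/3)^ℕ`, and `b, c ∈ T a`. A word `w` therefore evaluates into the coset
`T a^(ord w)`, which is `T` when `ord w = 0`. Translations act coordinatewise by powers of a 3-cycle,
so they lie in `W`, have order dividing 3, and commute.
-/

def translations (A : Type*) [AddGroup A] : Subgroup (Equiv.Perm A) where
  carrier := Set.range Equiv.addRight
  mul_mem' := by
    rintro _ _ ⟨f, rfl⟩ ⟨g, rfl⟩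
    exact ⟨g + f, Equiv.addRight_add g f⟩
  one_mem' := ⟨0, Equiv.addRight_zero⟩
  inv_mem' := by
    rintro _ ⟨f, rfl⟩
    exact ⟨-f, (Equiv.neg_addRight f).symm⟩

section Translations

variable {A : Type*}

theorem addRight_mem_translations [AddGroup A] (f : A) : Equiv.addRight f ∈ translations A :=
  ⟨f, rfl⟩

theorem addEquiv_conj_addRight [AddGroup A] (e : A ≃+ A) (f : A) :
    e.toEquiv * Equiv.addRight f * e.toEquiv⁻¹ = Equiv.addRight (e f) := by
  ext x
  simp [Equiv.Perm.inv_def]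

theorem addEquiv_mem_normalizer_translations [AddGroup A] (e : A ≃+ A) :
    e.toEquiv ∈ Subgroup.normalizer (translations A : Set (Equiv.Perm A)) := by
  refine Subgroup.mem_normalizer_iff.mpr fun h => ⟨?_, fun hconj => ?_⟩
  · rintro ⟨f, rfl⟩
    rw [addEquiv_conj_addRight]
    exact addRight_mem_translations _
  · obtain ⟨f, hf⟩ := hconj
    have hh : h = e.symm.toEquiv * Equiv.addRight f * e.symm.toEquiv⁻¹ := by
      rw [hf]
      ext x
      simp [Equiv.Perm.inv_def]
    rw [hh, addEquiv_conj_addRight]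
    exact addRight_mem_translations _

theorem commute_of_mem_translations [AddCommGroup A] {g h : Equiv.Perm A}
    (hg : g ∈ translations A) (hh : h ∈ translations A) : Commute g h := by
  obtain ⟨f, rfl⟩ := hg
  obtain ⟨f', rfl⟩ := hh
  rw [Commute, SemiconjBy, ← Equiv.addRight_add, ← Equiv.addRight_add, add_comm]

theorem pow_eq_one_of_mem_translations [AddGroup A] {n : ℕ} (hn : ∀ x : A, n • x = 0)
    {g : Equiv.Perm A} (hg : g ∈ translations A) : g ^ n = 1 := by
  obtain ⟨f, rfl⟩ := hg
  rw [Equiv.nsmul_addRight, hn, Equiv.addRight_zero]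

end Translations

section NormalizingElement

variable {G : Type*} [Group G] {T : Subgroup G} {a : G}

theorem mul_mul_zpow_neg_mem (ha : a ∈ Subgroup.normalizer (T : Set G)) {x y : G} {m n : ℤ}
    (hx : x * a ^ (-m) ∈ T) (hy : y * a ^ (-n) ∈ T) : x * y * a ^ (-(m + n)) ∈ T := by
  have hconj : a ^ m * (y * a ^ (-n)) * (a ^ m)⁻¹ ∈ T :=
    (Subgroup.mem_normalizer_iff.mp (Subgroup.zpow_mem _ ha m) _).mp hy
  convert T.mul_mem hx hconj using 1
  group

theorem inv_mul_zpow_mem (ha : a ∈ Subgroup.normalizer (T : Set G)) {x : G} {m : ℤ}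
    (hx : x * a ^ (-m) ∈ T) : x⁻¹ * a ^ m ∈ T := by
  have hconj : a ^ (-m) * (x * a ^ (-m)) * (a ^ (-m))⁻¹ ∈ T :=
    (Subgroup.mem_normalizer_iff.mp (Subgroup.zpow_mem _ ha (-m)) _).mp hx
  convert T.inv_mem hconj using 1
  group

end NormalizingElement

theorem sign_eq_one_of_pow_eq_one_of_odd {α : Type*} [Fintype α] [DecidableEq α]
    {σ : Equiv.Perm α} {n : ℕ} (hn : Odd n) (hσ : σ ^ n = 1) : Equiv.Perm.sign σ = 1 := by
  rw [← pow_one (Equiv.Perm.sign σ), ← Nat.odd_iff.mp hn, ← Int.units_pow_eq_pow_mod_two,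
    ← map_pow, hσ, map_one]

theorem three_nsmul_fin_three (x : Fin 3) : 3 • x = 0 := by
  revert x
  decide

theorem translations_subset_W : (translations (ℕ → X3) : Set (Equiv.Perm (ℕ → X3))) ⊆ W := by
  rintro _ ⟨f, rfl⟩
  refine ⟨fun n => Equiv.addRight (f n), fun n => ?_, fun w n => rfl⟩
  exact sign_eq_one_of_pow_eq_one_of_odd (by decide)
    (pow_eq_one_of_mem_translations three_nsmul_fin_three (addRight_mem_translations _))

theorem nxtA_apply (s x : Fin 3) : nxtA s x = x - s := by
  revert s x
  decide

theorem outA_apply (s x : Fin 3) : outA s x = -x - s := by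
  revert s x
  decide

theorem run_nxtA_add (s t : Fin 3) (w f : ℕ → X3) (n : ℕ) :
    run nxtA (s + t) (w + f) n = run nxtA s w n + run nxtA t f n := by
  induction n with
  | zero => rfl
  | succ n ih =>
    simp only [run, ih, nxtA_apply, Pi.add_apply]
    abel

theorem statePerm_nxtA_apply (s : Fin 3) (w : ℕ → X3) (n : ℕ) :
    statePerm nxtA outA s w n = -w n - run nxtA s w n :=
  outA_apply _ _

theorem statePerm_nxtA_add (s : Fin 3) (w f : ℕ → X3) :
    statePerm nxtA outA s (w + f) = a w + statePerm nxtA outA s f := by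
  funext n
  have hrun := run_nxtA_add 0 s w f n
  rw [zero_add] at hrun
  simp only [a, statePerm_nxtA_apply, Pi.add_apply, hrun]
  abel

def aAddEquiv : (ℕ → X3) ≃+ (ℕ → X3) := AddEquiv.mk' a (statePerm_nxtA_add 0)

theorem a_mem_normalizer_translations :
    a ∈ Subgroup.normalizer (translations (ℕ → X3) : Set (Equiv.Perm (ℕ → X3))) :=
  addEquiv_mem_normalizer_translations aAddEquiv

theorem statePerm_nxtA_eq_addRight_mul (s : Fin 3) :
    statePerm nxtA outA s = Equiv.addRight (statePerm nxtA outA s 0) * a :=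
  Equiv.ext fun w => by simpa using statePerm_nxtA_add s w 0

theorem gens_mul_inv_mem_translations (i : Fin 3) :
    gens i * a ^ (-1 : ℤ) ∈ translations (ℕ → X3) := by
  have hgens : gens i = statePerm nxtA outA i := by fin_cases i <;> rfl
  rw [hgens, statePerm_nxtA_eq_addRight_mul, zpow_neg_one, mul_inv_cancel_right]
  exact addRight_mem_translations _

theorem letterOf_mul_zpow_neg_mem_translations (p : Fin 3 × Bool) :
    letterOf p * a ^ (-if p.2 then (1 : ℤ) else -1) ∈ translations (ℕ → X3) := by
  obtain ⟨i, _ | _⟩ := p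
  · simpa [letterOf] using inv_mul_zpow_mem a_mem_normalizer_translations
      (gens_mul_inv_mem_translations i)
  · exact gens_mul_inv_mem_translations i

theorem evalWord_mul_zpow_neg_ordWord_mem_translations (l : List (Fin 3 × Bool)) :
    evalWord l * a ^ (-ordWord l) ∈ translations (ℕ → X3) := by
  induction l with
  | nil => simp [evalWord, ordWord]
  | cons p l ih =>
    have hword : evalWord (p :: l) = evalWord l * letterOf p := by
      simp [evalWord]
    have hord : ordWord (p :: l) = ordWord l + if p.2 then 1 else -1 := by
      simp [ordWord, add_comm]
    rw [hword, hord]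
    exact mul_mul_zpow_neg_mem a_mem_normalizer_translations ih
      (letterOf_mul_zpow_neg_mem_translations p)

/-- If an element `g` of `G_A` is represented by a word over
`{a^{±1}, b^{±1}, c^{±1}}` of exponent sum `0`, then `g ∈ W`; in particular
`g³ = 1` and any two such elements commute. -/
theorem ord_zero_mem_W :
    (∀ l : List (Fin 3 × Bool), ordWord l = 0 → evalWord l ∈ W) ∧
    (∀ l : List (Fin 3 × Bool), ordWord l = 0 → (evalWord l) ^ 3 = 1) ∧
    (∀ l l' : List (Fin 3 × Bool), ordWord l = 0 → ordWord l' = 0 →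
      Commute (evalWord l) (evalWord l')) := by
  have htrans (l : List (Fin 3 × Bool)) (hl : ordWord l = 0) :
      evalWord l ∈ translations (ℕ → X3) := by
    simpa [hl] using evalWord_mul_zpow_neg_ordWord_mem_translations l
  refine ⟨fun l hl => translations_subset_W (htrans l hl), fun l hl => ?_,
    fun l l' hl hl' => commute_of_mem_translations (htrans l hl) (htrans l' hl')⟩
  exact pow_eq_one_of_mem_translations (fun f => funext fun n => three_nsmul_fin_three (f n))
    (htrans l hl)

end Lamplighter
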